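/- For all c₁, c₂, c₃ ∈ ℂ: if L is a complex Lie algebra admitting a basis e₁,…,e₅ whose only nonzero brackets among basis vectors (up to antisymmetry) are [e₁,e₄]=e₁, [e₂,e₄]=e₂, [e₃,e₅]=e₃, [e₄,e₅]=c₁·e₁+c₂·e₂+c₃·e₃, and L′ is a complex Lie algebra admitting a basis f₁,…,f₅ whose only nonzero brackets are [f₁,f₄]=f₁, [f₂,f₄]=f₂, [f₃,f₅]=f₃, then L and L′ are isomorphic as Lie algebras over ℂ. -/

import Mathlib

/-!
The cocycle term is a coboundary. In the basis `e₁, e₂, e₃, e₄ - c₃e₃, e₅ + c₁e₁ + c₂e₂` the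
bracket of the last two vectors is `c₁e₁ + c₂e₂ + c₃e₃ - c₁e₁ - c₂e₂ - c₃e₃ = 0`, and the other
brackets are those of `d₈`. This change of basis is `1 + N` with `N² = 0`, hence invertible. So
`L` realizes the structure constants of `d₈`, and two Lie algebras realizing the same structure
constants are isomorphic through the linear map matching the two bases.
-/

/-- `Realizes L c` means that the complex Lie algebra `L` admits a basis `e₁, …, e₅`
(indexed by `Fin 5`) in which the brackets of basis vectors are given by the
structure constants `c`, i.e. `⁅eᵢ, eⱼ⁆ = ∑ₖ c i j k • eₖ` for all `i < j`,
all brackets of basis vectors being determined by these via antisymmetry. -/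
def Realizes (L : Type) [LieRing L] [LieAlgebra ℂ L]
    (c : Fin 5 → Fin 5 → Fin 5 → ℂ) : Prop :=
  ∃ e : Module.Basis (Fin 5) ℂ L, ∀ i j : Fin 5, i < j →
    ⁅e i, e j⁆ = ∑ k, c i j k • e k

/-- The algebra `d₈` with an added cocycle term
`ψ = c₁ψ⁴⁵₁ + c₂ψ⁴⁵₂ + c₃ψ⁴⁵₃`: `[e₁,e₄]=e₁`, `[e₂,e₄]=e₂`, `[e₃,e₅]=e₃`,
`[e₄,e₅]=c₁·e₁+c₂·e₂+c₃·e₃`. -/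
def d8psi (c₁ c₂ c₃ : ℂ) : Fin 5 → Fin 5 → Fin 5 → ℂ := fun i j =>
  if i = 0 ∧ j = 3 then ![1, 0, 0, 0, 0]
  else if i = 1 ∧ j = 3 then ![0, 1, 0, 0, 0]
  else if i = 2 ∧ j = 4 then ![0, 0, 1, 0, 0]
  else if i = 3 ∧ j = 4 then ![c₁, c₂, c₃, 0, 0]
  else 0

open LieModule in
theorem LinearEquiv.map_lie_of_basis {R ι L L' : Type*} [CommRing R] [LieRing L]
    [LieAlgebra R L] [LieRing L'] [LieAlgebra R L'] (g : L ≃ₗ[R] L') (e : Module.Basis ι R L)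
    (h : ∀ i j, g ⁅e i, e j⁆ = ⁅g (e i), g (e j)⁆) (x y : L) : g ⁅x, y⁆ = ⁅g x, g y⁆ := by
  have : (toEnd R L L : L →ₗ[R] Module.End R L).compr₂ (g : L →ₗ[R] L') =
      (toEnd R L' L' : L' →ₗ[R] Module.End R L').compl₁₂ (g : L →ₗ[R] L') (g : L →ₗ[R] L') :=
    LinearMap.ext_basis e e h
  exact LinearMap.congr_fun₂ this x y

theorem Module.Basis.exists_eq_add_apply_of_mul_self_eq_zero {R ι M : Type*} [Ring R]
    [AddCommGroup M] [Module R M] (e : Module.Basis ι R M) {N : Module.End R M}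
    (hN : N * N = 0) : ∃ b : Module.Basis ι R M, ∀ i, b i = e i + N (e i) :=
  ⟨e.map (LinearMap.GeneralLinearGroup.toLinearEquiv
    (IsNilpotent.isUnit_one_add ⟨2, by rw [pow_two, hN]⟩).unit), fun _ => rfl⟩

theorem nonempty_lieEquiv_of_realizes {c : Fin 5 → Fin 5 → Fin 5 → ℂ}
    {L L' : Type} [LieRing L] [LieAlgebra ℂ L] [LieRing L'] [LieAlgebra ℂ L']
    (hL : Realizes L c) (hL' : Realizes L' c) : Nonempty (L ≃ₗ⁅ℂ⁆ L') := by
  obtain ⟨e, he⟩ := hL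
  obtain ⟨f, hf⟩ := hL'
  let g := e.equiv f (Equiv.refl _)
  have hg : ∀ i, g (e i) = f i := fun i => e.equiv_apply i f _
  have hlt : ∀ i j, i < j → g ⁅e i, e j⁆ = ⁅g (e i), g (e j)⁆ := fun i j hij => by
    simp [he i j hij, hf i j hij, hg]
  have hbasis : ∀ i j, g ⁅e i, e j⁆ = ⁅g (e i), g (e j)⁆ := fun i j => by
    rcases lt_trichotomy i j with hij | rfl | hji
    · exact hlt i j hij
    · simp
    · rw [← lie_skew, map_neg, hlt j i hji, lie_skew]
  exact ⟨{ g with map_lie' := g.map_lie_of_basis e hbasis _ _ }⟩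

theorem Module.Basis.exists_eq_d8psi_untwist {R M : Type*} [CommRing R] [AddCommGroup M]
    [Module R M] (e : Module.Basis (Fin 5) R M) (c₁ c₂ c₃ : R) :
    ∃ b : Module.Basis (Fin 5) R M,
      ⇑b = ![e 0, e 1, e 2, e 3 - c₃ • e 2, e 4 + c₁ • e 0 + c₂ • e 1] := by
  let N : Module.End R M := e.constr R ![0, 0, 0, -(c₃ • e 2), c₁ • e 0 + c₂ • e 1]
  have hN : ∀ i, N (e i) = ![0, 0, 0, -(c₃ • e 2), c₁ • e 0 + c₂ • e 1] i := e.constr_basis R _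
  have hN2 : N * N = 0 := e.ext fun i => by fin_cases i <;> simp [hN]
  obtain ⟨b, hb⟩ := e.exists_eq_add_apply_of_mul_self_eq_zero hN2
  refine ⟨b, funext fun i => ?_⟩
  fin_cases i <;> simp [hb, hN, sub_eq_add_neg, add_assoc]

section D8Psi

variable {R L : Type*} [CommRing R] [LieRing L] [LieAlgebra R L]

structure D8PsiBrackets (c₁ c₂ c₃ : R) (e : Fin 5 → L) : Prop where
  lie01 : ⁅e 0, e 1⁆ = 0
  lie02 : ⁅e 0, e 2⁆ = 0
  lie03 : ⁅e 0, e 3⁆ = e 0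
  lie04 : ⁅e 0, e 4⁆ = 0
  lie12 : ⁅e 1, e 2⁆ = 0
  lie13 : ⁅e 1, e 3⁆ = e 1
  lie14 : ⁅e 1, e 4⁆ = 0
  lie23 : ⁅e 2, e 3⁆ = 0
  lie24 : ⁅e 2, e 4⁆ = e 2
  lie34 : ⁅e 3, e 4⁆ = c₁ • e 0 + c₂ • e 1 + c₃ • e 2

theorem D8PsiBrackets.untwist {c₁ c₂ c₃ : R} {e : Fin 5 → L} (h : D8PsiBrackets c₁ c₂ c₃ e) :
    D8PsiBrackets (0 : R) 0 0 ![e 0, e 1, e 2, e 3 - c₃ • e 2, e 4 + c₁ • e 0 + c₂ • e 1] := by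
  have h10 : ⁅e 1, e 0⁆ = 0 := by rw [← lie_skew, h.lie01, neg_zero]
  have h20 : ⁅e 2, e 0⁆ = 0 := by rw [← lie_skew, h.lie02, neg_zero]
  have h21 : ⁅e 2, e 1⁆ = 0 := by rw [← lie_skew, h.lie12, neg_zero]
  have h30 : ⁅e 3, e 0⁆ = -e 0 := by rw [← lie_skew, h.lie03]
  have h31 : ⁅e 3, e 1⁆ = -e 1 := by rw [← lie_skew, h.lie13]
  constructor <;>
    simp [lie_add, lie_sub, sub_lie, lie_smul, smul_lie, h.lie01, h.lie02, h.lie03, h.lie04,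
      h.lie12, h.lie13, h.lie14, h.lie23, h.lie24, h.lie34, h10, h20, h21, h30, h31]

end D8Psi

theorem realizes_d8psi_iff {c₁ c₂ c₃ : ℂ} {L : Type} [LieRing L] [LieAlgebra ℂ L] :
    Realizes L (d8psi c₁ c₂ c₃) ↔
      ∃ e : Module.Basis (Fin 5) ℂ L, D8PsiBrackets c₁ c₂ c₃ ⇑e := by
  refine exists_congr fun e => ?_
  simp only [d8psi, Fin.isValue, Fin.sum_univ_five, Fin.forall_fin_succ, not_lt_zero, Fin.reduceEq,
    and_false, ↓reduceIte, Pi.zero_apply, zero_smul, add_zero, IsEmpty.forall_iff,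
    Fin.succ_zero_eq_one, Fin.lt_one_iff, Nat.reduceAdd, Fin.succ_one_eq_two, Fin.reduceSucc,
    and_true, true_and, forall_const, Fin.reduceLT, Matrix.cons_val_zero, one_smul,
    Matrix.cons_val_one, Matrix.cons_val, Fin.succ_ne_zero, zero_add, lt_self_iff_false, lie_self,
    and_self]
  constructor
  · rintro ⟨⟨h01, h02, h03, h04⟩, ⟨h12, h13, h14⟩, ⟨h23, h24⟩, h34⟩
    exact ⟨h01, h02, h03, h04, h12, h13, h14, h23, h24, h34⟩
  · rintro ⟨h01, h02, h03, h04, h12, h13, h14, h23, h24, h34⟩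
    exact ⟨⟨h01, h02, h03, h04⟩, ⟨h12, h13, h14⟩, ⟨h23, h24⟩, h34⟩

/-- Adding any cocycle term `ψ = c₁ψ⁴⁵₁ + c₂ψ⁴⁵₂ + c₃ψ⁴⁵₃` to the
algebra `d₈` yields an isomorphic algebra. -/
theorem d8_psi_iso_d8 (c₁ c₂ c₃ : ℂ)
    (L L' : Type) [LieRing L] [LieAlgebra ℂ L] [LieRing L'] [LieAlgebra ℂ L']
    (hL : Realizes L (d8psi c₁ c₂ c₃)) (hL' : Realizes L' (d8psi 0 0 0)) :
    Nonempty (L ≃ₗ⁅ℂ⁆ L') := by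
  obtain ⟨e, he⟩ := realizes_d8psi_iff.1 hL
  obtain ⟨b, hb⟩ := e.exists_eq_d8psi_untwist c₁ c₂ c₃
  have hL₀ : Realizes L (d8psi 0 0 0) := realizes_d8psi_iff.2 ⟨b, hb ▸ he.untwist⟩
  exact nonempty_lieEquiv_of_realizes hL₀ hL'
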